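/- Let f : G → G' be a homomorphism of finite groups and ⇝ a G'-transfer system. Then f⁻¹_L(⇝), the transfer system generated by the preimage pairs {(f⁻¹K', f⁻¹H') : K' ⇝ H'}, equals the reflexive-transitive closure of the relation ⋃_{K' ⇝ H'} { (f⁻¹(K') ∩ L, L) : L ⊆ f⁻¹(H') } on Sub(G). -/
import Mathlib


/-- Conjugation of a subgroup: `gKg⁻¹`. -/
def conjSub {G : Type*} [Group G] (g : G) (K : Subgroup G) : Subgroup G :=
  Subgroup.map (MulAut.conj g).toMonoidHom K

/-- A `G`-transfer system: a partial order on subgroups refining inclusion,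
closed under conjugation and restriction. -/
def IsTransferSystem {G : Type*} [Group G] (R : Subgroup G → Subgroup G → Prop) : Prop :=
  (∀ H, R H H) ∧
  (∀ ⦃K H⦄, R K H → R H K → K = H) ∧
  (∀ ⦃K J H⦄, R K J → R J H → R K H) ∧
  (∀ ⦃K H⦄, R K H → K ≤ H) ∧
  (∀ ⦃K H⦄ (g : G), R K H → R (conjSub g K) (conjSub g H)) ∧
  (∀ ⦃K H⦄, R K H → ∀ ⦃L⦄, L ≤ H → R (L ⊓ K) L)

/-- `TL` is the transfer system generated by the relation `R`:
the least transfer system containing `R`. -/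
def IsGenBy {G : Type*} [Group G] (TL R : Subgroup G → Subgroup G → Prop) : Prop :=
  IsTransferSystem TL ∧ (∀ K H, R K H → TL K H) ∧
    ∀ T, IsTransferSystem T → (∀ K H, R K H → T K H) → ∀ K H, TL K H → T K H

lemma mem_conjSub {G : Type*} [Group G] {g x : G} {K : Subgroup G} :
    x ∈ conjSub g K ↔ g⁻¹ * x * g ∈ K := by
  constructor
  · rintro ⟨y, hy, rfl⟩
    simpa [MulAut.conj_apply, mul_assoc] using hy
  · intro h
    exact ⟨g⁻¹ * x * g, h, by simp [MulAut.conj_apply]; group⟩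

lemma conjSub_comap {G G' : Type*} [Group G] [Group G'] (f : G →* G') (g : G)
    (K' : Subgroup G') : conjSub g (K'.comap f) = (conjSub (f g) K').comap f := by
  ext x; simp [mem_conjSub, Subgroup.mem_comap, map_mul, map_inv]

lemma conjSub_inf {G : Type*} [Group G] (g : G) (K L : Subgroup G) :
    conjSub g (K ⊓ L) = conjSub g K ⊓ conjSub g L := by
  ext x; simp [mem_conjSub]

lemma conjSub_mono {G : Type*} [Group G] (g : G) {K L : Subgroup G} (h : K ≤ L) :
    conjSub g K ≤ conjSub g L := fun x hx => mem_conjSub.2 (h (mem_conjSub.1 hx))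

theorem stmt18 {G G' : Type*} [Group G] [Group G'] [Finite G] [Finite G']
    (f : G →* G')
    (W : Subgroup G' → Subgroup G' → Prop) (hW : IsTransferSystem W)
    (TL : Subgroup G → Subgroup G → Prop)
    (hTL : IsGenBy TL (fun A B => ∃ K' H' : Subgroup G', W K' H' ∧
      A = K'.comap f ∧ B = H'.comap f)) :
    ∀ A B, TL A B ↔ Relation.ReflTransGen
      (fun A B => ∃ K' H' : Subgroup G', W K' H' ∧
        ∃ L : Subgroup G, L ≤ H'.comap f ∧ A = K'.comap f ⊓ L ∧ B = L) A B := by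
  obtain ⟨Wrefl, Wanti, Wtrans, Wle, Wconj, Wres⟩ := hW
  obtain ⟨hT, hgen, hleast⟩ := hTL
  set Step : Subgroup G → Subgroup G → Prop := fun A B =>
    ∃ K' H' : Subgroup G', W K' H' ∧
      ∃ L : Subgroup G, L ≤ H'.comap f ∧ A = K'.comap f ⊓ L ∧ B = L with hStep
  set S : Subgroup G → Subgroup G → Prop := fun A B => Relation.ReflTransGen Step A B with hS
  have step_le : ∀ ⦃A B⦄, Step A B → A ≤ B := by
    rintro A B ⟨K', H', hW', L, hL, rfl, rfl⟩
    exact inf_le_right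
  have S_le : ∀ ⦃A B⦄, S A B → A ≤ B := by
    intro A B h
    induction h with
    | refl => exact le_rfl
    | tail _ st ih => exact ih.trans (step_le st)
  have step_conj : ∀ ⦃A B⦄ (g : G), Step A B → Step (conjSub g A) (conjSub g B) := by
    rintro A B g ⟨K', H', hW', L, hL, rfl, rfl⟩
    refine ⟨conjSub (f g) K', conjSub (f g) H', Wconj (f g) hW', conjSub g B, ?_, ?_, rfl⟩
    · rw [← conjSub_comap]; exact conjSub_mono g hL
    · rw [conjSub_inf, conjSub_comap]
  have S_trans : ∀ ⦃K J H⦄, S K J → S J H → S K H := fun _ _ _ h1 h2 => h1.trans h2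
  have S_res : ∀ ⦃K H⦄, S K H → ∀ ⦃L⦄, L ≤ H → S (L ⊓ K) L := by
    intro K H h
    induction h using Relation.ReflTransGen.head_induction_on with
    | refl => intro L hL; rw [inf_eq_left.2 hL]
    | head st hrest ih =>
      rename_i K₀ J
      intro L hL
      have hJH : J ≤ H := S_le hrest
      have h1 : Step ((L ⊓ J) ⊓ K₀) (L ⊓ J) := by
        obtain ⟨K', H', hW', M, hM, rfl, rfl⟩ := st
        refine ⟨K', H', hW', L ⊓ J, inf_le_right.trans hM, ?_, rfl⟩
        simp only [inf_assoc, inf_comm, inf_left_comm, inf_idem]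
        rw [← inf_assoc, inf_idem]
      have hK₀J : K₀ ≤ J := step_le st
      have heq : (L ⊓ J) ⊓ K₀ = L ⊓ K₀ := by
        rw [inf_assoc]
        congr 1
        exact inf_eq_right.2 hK₀J
      exact Relation.ReflTransGen.head (heq ▸ h1) (ih hL)
  have hSTS : IsTransferSystem S := by
    refine ⟨fun H => Relation.ReflTransGen.refl, ?_, S_trans, S_le, ?_, S_res⟩
    · intro K H h1 h2; exact le_antisymm (S_le h1) (S_le h2)
    · intro K H g h
      induction h with
      | refl => exact Relation.ReflTransGen.refl
      | tail _ st ih => exact ih.tail (step_conj g st)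
  intro A B
  constructor
  · intro h
    refine hleast S hSTS ?_ A B h
    rintro K H ⟨K', H', hW', rfl, rfl⟩
    exact Relation.ReflTransGen.single
      ⟨K', H', hW', H'.comap f, le_rfl,
        (inf_eq_left.2 (Subgroup.comap_mono (Wle hW'))).symm, rfl⟩
  · intro h
    induction h with
    | refl => exact hT.1 A
    | tail _ st ih =>
      refine hT.2.2.1 ih ?_
      obtain ⟨K', H', hW', L, hL, rfl, rfl⟩ := st
      have hg : TL (K'.comap f) (H'.comap f) := hgen _ _ ⟨K', H', hW', rfl, rfl⟩
      have := hT.2.2.2.2.2 hg hL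
      rwa [inf_comm] at this
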